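/- Fix p ≤ n, a p-element subset Y of [n], and w ∈ S_n with Y ≤ wW_p in the Bruhat order on cosets (equivalently Y ≤ {w_1,...,w_p}). Then the set {v ∈ S_n : vW_p = Y and v ≤ w in Bruhat order} is nonempty and contains a unique maximal element in the Bruhat order. -/

import Mathlib

/-- Dominance order on equal-cardinality finite sets in a linear order:
the i-th smallest element of `E` is at most the i-th smallest element of `F`. -/
def Dom {α : Type*} [LinearOrder α] (E F : Finset α) : Prop :=
  List.Forall₂ (· ≤ ·) (Finset.sort E (· ≤ ·)) (Finset.sort F (· ≤ ·))

/-- The set `{w_1, ..., w_i}` of the first `i` values of a permutation `w` of `[n]`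
in one-line notation. -/
def initSet {n : ℕ} (w : Equiv.Perm (Fin n)) (i : ℕ) : Finset (Fin n) :=
  (Finset.univ.filter (fun j : Fin n => (j : ℕ) < i)).image w

/-- The Bruhat order on permutations, via the tableau criterion. -/
def Bruhat {n : ℕ} (v w : Equiv.Perm (Fin n)) : Prop :=
  ∀ i ≤ n, Dom (initSet v i) (initSet w i)

/-!
By the tableau criterion, `v ≤ w` says that every initial set `v[i] = {v₁, …, vᵢ}` is dominated
by `w[i]`, and `vW_p = Y` says `v[p] = Y`. So for `i ≤ p` the set `v[i]` is an `i`-subset of `Y`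
dominated by `w[i]`, and for `i ≥ p` an `i`-superset of `Y` dominated by `w[i]`; the second case
is the first one for complements in the reversed order. Each such family is nonempty (drop the
largest element to go down one level) and closed under the componentwise maximum of sorted
sets, so it has a greatest member `Cᵢ`. An exchange argument shows `Cᵢ ⊆ Cᵢ₊₁`, so the `Cᵢ` are
the initial sets of a permutation `θ`, which is then the greatest element of the coset below `w`;
it is unique because the tableau criterion determines a permutation by its initial sets.
-/

section Dominance

variable {α : Type*} [LinearOrder α]

theorem Dom.card_eq {E F : Finset α} (h : Dom E F) : E.card = F.card := by
  simpa using h.length_eq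

theorem Dom.trans {E F G : Finset α} (h₁ : Dom E F) (h₂ : Dom F G) : Dom E G := by
  rw [Dom, List.forall₂_iff_get] at *
  exact ⟨h₁.1.trans h₂.1, fun i hE hG => (h₁.2 i hE (h₁.1 ▸ hE)).trans (h₂.2 i _ hG)⟩

theorem Dom.antisymm {E F : Finset α} (h₁ : Dom E F) (h₂ : Dom F E) : E = F := by
  have hsort : E.sort (· ≤ ·) = F.sort (· ≤ ·) :=
    List.ext_get h₁.length_eq fun i hE hF =>
      le_antisymm ((List.forall₂_iff_get.1 h₁).2 i hE hF) ((List.forall₂_iff_get.1 h₂).2 i hF hE)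
  simpa using congrArg List.toFinset hsort

def domJoin (E F : Finset α) : Finset α :=
  (List.zipWith max (E.sort (· ≤ ·)) (F.sort (· ≤ ·))).toFinset

theorem sort_domJoin (E F : Finset α) :
    (domJoin E F).sort (· ≤ ·) = List.zipWith max (E.sort (· ≤ ·)) (F.sort (· ≤ ·)) := by
  have hlt : (List.zipWith max (E.sort (· ≤ ·)) (F.sort (· ≤ ·))).SortedLT := by
    refine List.sortedLT_iff_getElem_lt_getElem_of_lt.2 fun i j hi hj hij => ?_
    simp only [List.getElem_zipWith]
    exact max_lt_max (E.sortedLT_sort.getElem_lt_getElem_of_lt hij)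
      (F.sortedLT_sort.getElem_lt_getElem_of_lt hij)
  exact (List.toFinset_sort _ hlt.nodup).2 hlt.sortedLE.pairwise

theorem domJoin_subset_union (E F : Finset α) : domJoin E F ⊆ E ∪ F := by
  intro x hx
  obtain ⟨i, hi, rfl⟩ := List.mem_iff_getElem.1 (List.mem_toFinset.1 hx)
  rw [List.length_zipWith] at hi
  rw [List.getElem_zipWith, Finset.mem_union]
  rcases max_choice (E.sort (· ≤ ·))[i] (F.sort (· ≤ ·))[i] with h | h <;> rw [h]
  · exact .inl ((Finset.mem_sort _).1 (List.getElem_mem _))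
  · exact .inr ((Finset.mem_sort _).1 (List.getElem_mem _))

theorem dom_domJoin_left {E F : Finset α} (h : E.card = F.card) : Dom E (domJoin E F) := by
  rw [Dom, sort_domJoin, List.forall₂_iff_get]
  exact ⟨by simp [h], fun i _ _ => by simp⟩

theorem dom_domJoin_right {E F : Finset α} (h : E.card = F.card) : Dom F (domJoin E F) := by
  rw [Dom, sort_domJoin, List.forall₂_iff_get]
  exact ⟨by simp [h], fun i _ _ => by simp⟩

theorem domJoin_dom {E F G : Finset α} (hE : Dom E G) (hF : Dom F G) : Dom (domJoin E F) G := by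
  rw [Dom, sort_domJoin, List.forall₂_iff_get] at *
  refine ⟨by simp [hE.1, hF.1], fun i hi hG => ?_⟩
  simp only [List.get_eq_getElem, List.getElem_zipWith]
  exact max_le (hE.2 i _ hG) (hF.2 i _ hG)

end Dominance

section Counting

variable {α : Type*} [LinearOrder α]

theorem List.Forall₂.countP_le_countP {l₁ l₂ : List α} (h : List.Forall₂ (· ≤ ·) l₁ l₂)
    (t : α) : l₁.countP (t ≤ ·) ≤ l₂.countP (t ≤ ·) := by
  induction h with
  | nil => rfl
  | @cons a b _ _ hab _ ih =>
    simp only [List.countP_cons]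
    by_cases hta : t ≤ a
    · simp [hta, hta.trans hab, ih]
    · simp only [hta, decide_false, Bool.false_eq_true, if_false]
      split <;> omega

theorem List.forall₂_le_of_countP_le {l₁ l₂ : List α} (h₁ : l₁.Pairwise (· < ·))
    (h₂ : l₂.Pairwise (· < ·)) (hlen : l₁.length = l₂.length)
    (h : ∀ t, l₁.countP (t ≤ ·) ≤ l₂.countP (t ≤ ·)) : List.Forall₂ (· ≤ ·) l₁ l₂ := by
  induction l₁ generalizing l₂ with
  | nil => cases l₂ <;> simp_all
  | cons a l₁ ih =>
    obtain _ | ⟨b, l₂⟩ := l₂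
    · simp at hlen
    rw [List.pairwise_cons] at h₁ h₂
    simp only [List.length_cons, Nat.add_right_cancel_iff] at hlen
    have hall {c : α} {l : List α} (hl : ∀ x ∈ l, c < x) {t : α} (htc : t ≤ c) :
        l.countP (t ≤ ·) = l.length :=
      List.countP_eq_length.2 fun x hx => by simpa using htc.trans (hl x hx).le
    have hab : a ≤ b := by
      by_contra hba
      have ha := h a
      have hb := List.countP_le_length (p := (a ≤ ·)) (l := l₂)
      simp only [List.countP_cons, hall h₁.1 le_rfl, le_rfl, hba, decide_true, decide_false,
        if_true, Bool.false_eq_true, if_false] at ha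
      omega
    refine .cons hab (ih h₁.2 h₂.2 hlen fun t => ?_)
    by_cases htb : t ≤ b
    · rw [hall h₂.1 htb, ← hlen]
      exact List.countP_le_length
    · have hta : ¬ t ≤ a := fun hta => htb (hta.trans hab)
      simpa [List.countP_cons, hta, htb] using h t

def numGe (s : Finset α) (t : α) : ℕ :=
  (s.filter (t ≤ ·)).card

theorem numGe_eq_countP (s : Finset α) (t : α) :
    numGe s t = (s.sort (· ≤ ·)).countP (t ≤ ·) := by
  rw [numGe, (Finset.sort_perm_toList _ _).countP_eq, Finset.toList, ← Multiset.coe_countP,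
    Multiset.coe_toList, Multiset.countP_eq_card_filter]
  rfl

theorem dom_iff_numGe {E F : Finset α} :
    Dom E F ↔ E.card = F.card ∧ ∀ t, numGe E t ≤ numGe F t := by
  simp only [numGe_eq_countP]
  refine ⟨fun h => ⟨h.card_eq, h.countP_le_countP⟩, fun ⟨hcard, h⟩ => ?_⟩
  exact List.forall₂_le_of_countP_le E.sortedLT_sort.pairwise F.sortedLT_sort.pairwise
    (by simpa using hcard) h

theorem numGe_le_card (s : Finset α) (t : α) : numGe s t ≤ s.card :=
  Finset.card_filter_le _ _

theorem numGe_anti (s : Finset α) {t t' : α} (h : t ≤ t') : numGe s t' ≤ numGe s t :=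
  Finset.card_le_card (Finset.monotone_filter_right _ fun _ _ hx => h.trans hx)

theorem numGe_eq_of_forall_le {s : Finset α} {t t' : α} (htt' : t ≤ t')
    (h : ∀ c ∈ s, t ≤ c → t' ≤ c) : numGe s t = numGe s t' :=
  le_antisymm (Finset.card_le_card fun c hc => by
      rw [Finset.mem_filter] at hc ⊢; exact ⟨hc.1, h c hc.1 hc.2⟩)
    (numGe_anti s htt')

theorem numGe_insert {s : Finset α} {a : α} (ha : a ∉ s) (t : α) :
    numGe (insert a s) t = numGe s t + if t ≤ a then 1 else 0 := by
  rw [numGe, numGe, Finset.filter_insert]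
  split
  · rw [Finset.card_insert_of_notMem (by simp [ha])]
  · rfl

theorem numGe_erase_add {s : Finset α} {a : α} (ha : a ∈ s) (t : α) :
    numGe (s.erase a) t + (if t ≤ a then 1 else 0) = numGe s t := by
  rw [← numGe_insert (Finset.notMem_erase a s), Finset.insert_erase ha]

theorem numGe_swap {C : Finset α} {a b : α} (hb : b ∈ C) (ha : a ∉ C) (t : α) :
    numGe (insert a (C.erase b)) t + (if t ≤ b then 1 else 0) =
      numGe C t + if t ≤ a then 1 else 0 := by
  rw [numGe_insert (fun h => ha (Finset.mem_of_mem_erase h)), ← numGe_erase_add hb t]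
  omega

theorem numGe_eq_erase_add_sdiff {C C' : Finset α} {x t : α} (hxC' : x ∉ C')
    (habove : ∀ c ∈ C, x < c → c ∈ C') (hxt : x ≤ t) :
    numGe C' t = numGe (C.erase x) t + numGe (C' \ C) t := by
  rw [numGe, numGe, numGe, ← Finset.card_union_of_disjoint
    (Finset.disjoint_filter_filter (Finset.disjoint_of_subset_left (Finset.erase_subset x C)
      Finset.disjoint_sdiff))]
  congr 1
  ext c
  simp only [Finset.mem_filter, Finset.mem_union, Finset.mem_erase, Finset.mem_sdiff]
  constructor
  · rintro ⟨hc', htc⟩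
    by_cases hc : c ∈ C
    · exact .inl ⟨⟨fun h => hxC' (h ▸ hc'), hc⟩, htc⟩
    · exact .inr ⟨⟨hc', hc⟩, htc⟩
  · rintro (⟨⟨hcx, hc⟩, htc⟩ | ⟨⟨hc', _⟩, htc⟩)
    · exact ⟨habove c hc (lt_of_le_of_ne (hxt.trans htc) (Ne.symm hcx)), htc⟩
    · exact ⟨hc', htc⟩

theorem Dom.exists_subset_of_insert {A B : Finset α} {β : α} (hβ : β ∉ B)
    (h : Dom A (insert β B)) : ∃ A' ⊆ A, Dom A' B := by
  obtain ⟨hcard, hAB⟩ := dom_iff_numGe.1 h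
  rw [Finset.card_insert_of_notMem hβ] at hcard
  obtain ⟨a, ha, hamax⟩ := A.exists_max_image id (Finset.card_pos.1 (by omega))
  refine ⟨A.erase a, Finset.erase_subset a A,
    dom_iff_numGe.2 ⟨by rw [Finset.card_erase_of_mem ha]; omega, fun t => ?_⟩⟩
  have hA := numGe_erase_add ha t
  have h1 := hAB t
  rw [numGe_insert hβ] at h1
  by_cases hta : t ≤ a
  · rw [if_pos hta] at hA
    split_ifs at h1 <;> omega
  · have : numGe A t = 0 := Finset.card_eq_zero.2 <| Finset.filter_eq_empty_iff.2
      fun c hc htc => hta (htc.trans (hamax c hc))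
    omega

end Counting

section Greatest

variable {α : Type*} [LinearOrder α]

def IsDomGreatest (Y B C : Finset α) : Prop :=
  C ⊆ Y ∧ Dom C B ∧ ∀ D ⊆ Y, Dom D B → Dom D C

theorem exists_isDomGreatest {Y B : Finset α} (h : ∃ A ⊆ Y, Dom A B) :
    ∃ C, IsDomGreatest Y B C := by
  classical
  set 𝓕 := Y.powerset.filter (Dom · B)
  have hmem {A : Finset α} : A ∈ 𝓕 ↔ A ⊆ Y ∧ Dom A B := by simp [𝓕]
  have hbound : ∀ 𝓖 ⊆ 𝓕, ∃ C ∈ 𝓕, ∀ D ∈ 𝓖, Dom D C := by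
    intro 𝓖
    induction 𝓖 using Finset.induction_on with
    | empty =>
      obtain ⟨A, hAY, hAB⟩ := h
      exact fun _ => ⟨A, hmem.2 ⟨hAY, hAB⟩, by simp⟩
    | insert E 𝓖 _ ih =>
      intro hsub
      obtain ⟨C, hC, hCmax⟩ := ih ((Finset.subset_insert E 𝓖).trans hsub)
      obtain ⟨hEY, hEB⟩ := hmem.1 (hsub (Finset.mem_insert_self E 𝓖))
      obtain ⟨hCY, hCB⟩ := hmem.1 hC
      have hcard : E.card = C.card := hEB.card_eq.trans hCB.card_eq.symm
      refine ⟨domJoin E C, hmem.2 ⟨(domJoin_subset_union E C).trans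
        (Finset.union_subset hEY hCY), domJoin_dom hEB hCB⟩, ?_⟩
      simp only [Finset.mem_insert, forall_eq_or_imp]
      exact ⟨dom_domJoin_left hcard, fun D hD => (hCmax D hD).trans (dom_domJoin_right hcard)⟩
  obtain ⟨C, hC, hCmax⟩ := hbound 𝓕 subset_rfl
  obtain ⟨hCY, hCB⟩ := hmem.1 hC
  exact ⟨C, hCY, hCB, fun D hDY hDB => hCmax D (hmem.2 ⟨hDY, hDB⟩)⟩

/-- Otherwise trading `b` for `a` in `C` would give a strictly larger admissible set. -/
theorem IsDomGreatest.exists_tight {Y B C : Finset α} (hC : IsDomGreatest Y B C) {a b : α}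
    (hb : b ∈ C) (ha : a ∈ Y) (haC : a ∉ C) (hba : b < a) :
    ∃ t, b < t ∧ t ≤ a ∧ numGe C t = numGe B t := by
  by_contra! hslack
  obtain ⟨hCY, hCB, hCmax⟩ := hC
  obtain ⟨hcard, hCB⟩ := dom_iff_numGe.1 hCB
  set D := insert a (C.erase b)
  have hD : ∀ t, numGe D t + _ = numGe C t + _ := numGe_swap hb haC
  have hDY : D ⊆ Y := Finset.insert_subset ha ((Finset.erase_subset b C).trans hCY)
  have hDB : Dom D B := by
    refine dom_iff_numGe.2 ⟨?_, fun t => ?_⟩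
    · rw [Finset.card_insert_of_notMem (fun h => haC (Finset.mem_of_mem_erase h)),
        Finset.card_erase_of_mem hb, ← hcard]
      have := Finset.card_pos.2 ⟨b, hb⟩
      omega
    · have h1 := hD t
      have h2 := hCB t
      by_cases htb : t ≤ b
      · simp only [htb, htb.trans hba.le, if_true] at h1
        omega
      · by_cases hta : t ≤ a
        · have h3 := hslack t (lt_of_not_ge htb) hta
          simp only [htb, hta, if_true, if_false] at h1
          omega
        · simp only [htb, hta, if_false] at h1
          omega
  have h1 := (dom_iff_numGe.1 (hCmax D hDY hDB)).2 a
  have h2 := hD a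
  simp only [le_refl, if_true, not_le.2 hba, if_false] at h2
  omega

variable {Y B C C' : Finset α} {β : α}

/-- The least element `z` of `C' \ C` above `x` could replace `x` in `C`, were it not for a
bound that is tight for `C` somewhere in `(x, z]`; there `C'` can only gain through `β`. -/
theorem IsDomGreatest.numGe_sdiff_le (hβ : β ∉ B) (hC : IsDomGreatest Y B C)
    (hC' : IsDomGreatest Y (insert β B) C') {x : α} (hxC : x ∈ C)
    (hsplit : ∀ t, x < t → numGe C' t = numGe C t + numGe (C' \ C) t) :
    numGe (C' \ C) x ≤ if x < β then 1 else 0 := by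
  by_contra hgt
  have hpos : 0 < numGe (C' \ C) x := by split_ifs at hgt <;> omega
  obtain ⟨z, hz, hzmin⟩ := ((C' \ C).filter (x ≤ ·)).exists_min_image id (Finset.card_pos.1 hpos)
  obtain ⟨⟨hzC', hzC⟩, hxz⟩ : (z ∈ C' ∧ z ∉ C) ∧ x ≤ z := by simpa using hz
  obtain ⟨t, hxt, htz, hCt⟩ := hC.exists_tight hxC (hC'.1 hzC') hzC
    (lt_of_le_of_ne hxz fun h => hzC (h ▸ hxC))
  have het : numGe (C' \ C) x = numGe (C' \ C) t := numGe_eq_of_forall_le hxt.le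
    fun c hc hxc => htz.trans (hzmin c (Finset.mem_filter.2 ⟨hc, hxc⟩))
  have h1 := hsplit t hxt
  have h2 := (dom_iff_numGe.1 hC'.2.1).2 t
  rw [numGe_insert hβ] at h2
  by_cases htβ : t ≤ β
  · rw [if_pos htβ] at h2
    rw [if_pos (hxt.trans_le htβ)] at hgt
    omega
  · rw [if_neg htβ] at h2
    omega

/-- The largest element `y` of `C'` below `x` could be traded for `x`, were it not for a bound
that is tight for `C'` somewhere in `(y, x]`. -/
theorem IsDomGreatest.exists_numGe_le (hβ : β ∉ B) (hC : IsDomGreatest Y B C)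
    (hC' : IsDomGreatest Y (insert β B) C') {x : α} (hxY : x ∈ Y) (hxC' : x ∉ C')
    (hx : numGe C' x < C'.card) :
    ∃ t ≤ x, numGe C x + (if t ≤ β then 1 else 0) ≤ numGe C' x := by
  have hbelow : (C'.filter (· < x)).Nonempty := by
    by_contra hempty
    rw [numGe, Finset.filter_true_of_mem fun c hc => not_lt.1 fun hcx =>
      hempty ⟨c, Finset.mem_filter.2 ⟨hc, hcx⟩⟩] at hx
    exact lt_irrefl _ hx
  obtain ⟨y, hy, hymax⟩ := (C'.filter (· < x)).exists_max_image id hbelow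
  obtain ⟨hyC', hyx⟩ := Finset.mem_filter.1 hy
  obtain ⟨t, hyt, htx, hC't⟩ := hC'.exists_tight hyC' hxY hxC' hyx
  have hC'tx : numGe C' t = numGe C' x := numGe_eq_of_forall_le htx fun c hc htc =>
    not_lt.1 fun hcx => (not_le.2 hyt) (htc.trans (hymax c (Finset.mem_filter.2 ⟨hc, hcx⟩)))
  refine ⟨t, htx, ?_⟩
  have h1 := numGe_anti C htx
  have h2 := (dom_iff_numGe.1 hC.2.1).2 t
  rw [numGe_insert hβ] at hC't
  omega

theorem IsDomGreatest.subset_of_insert (hβ : β ∉ B) (hC : IsDomGreatest Y B C)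
    (hC' : IsDomGreatest Y (insert β B) C') : C ⊆ C' := by
  by_contra hsub
  obtain ⟨x, hx, hxmax⟩ := (C \ C').exists_max_image id (Finset.sdiff_nonempty.2 hsub)
  obtain ⟨hxC, hxC'⟩ := Finset.mem_sdiff.1 hx
  have habove : ∀ c ∈ C, x < c → c ∈ C' := fun c hc hxc =>
    by_contra fun hc' => not_le.2 hxc (hxmax c (Finset.mem_sdiff.2 ⟨hc, hc'⟩))
  have hsplit {t : α} (hxt : x ≤ t) := numGe_eq_erase_add_sdiff hxC' habove hxt
  have hnew := hC.numGe_sdiff_le hβ hC' hxC fun t hxt => by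
    rw [hsplit hxt.le, ← numGe_erase_add hxC t, if_neg (not_le.2 hxt), add_zero]
  have hnew_le : numGe (C' \ C) x ≤ 1 := hnew.trans (by split_ifs <;> omega)
  have hCx := numGe_erase_add hxC x
  have hC'x := hsplit le_rfl
  rw [if_pos le_rfl] at hCx
  have hcard : C'.card = C.card + 1 := by
    rw [(dom_iff_numGe.1 hC'.2.1).1, Finset.card_insert_of_notMem hβ, hC.2.1.card_eq]
  obtain ⟨t, htx, ht⟩ := hC.exists_numGe_le hβ hC' (hC.1 hxC) hxC' (by
    have := numGe_le_card C x
    omega)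
  by_cases hxβ : x < β
  · rw [if_pos (htx.trans hxβ.le)] at ht
    omega
  · rw [if_neg hxβ] at hnew
    omega

theorem exists_isDomGreatest_chain {B : ℕ → Finset α} {p : ℕ}
    (hB : ∀ i < p, ∃ β ∉ B i, B (i + 1) = insert β (B i)) (hY : Dom Y (B p)) :
    ∃ C : ℕ → Finset α, C p = Y ∧ (∀ i < p, C i ⊆ C (i + 1)) ∧
      ∀ i ≤ p, IsDomGreatest Y (B i) (C i) := by
  have hadm : ∀ i ≤ p, ∃ A ⊆ Y, Dom A (B i) := by
    intro i hi
    induction hi using Nat.decreasingInduction with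
    | self => exact ⟨Y, subset_rfl, hY⟩
    | of_succ i hi ih =>
      obtain ⟨β, hβ, hBi⟩ := hB i hi
      obtain ⟨A, hAY, hA⟩ := ih
      obtain ⟨A', hA'A, hA'⟩ := (hBi ▸ hA).exists_subset_of_insert hβ
      exact ⟨A', hA'A.trans hAY, hA'⟩
  have : ∀ i, ∃ C, i ≤ p → IsDomGreatest Y (B i) C := fun i =>
    if hi : i ≤ p then (exists_isDomGreatest (hadm i hi)).imp fun _ hC _ => hC
    else ⟨∅, fun h => absurd h hi⟩
  choose C hC using this
  refine ⟨C, ?_, fun i hi => ?_, hC⟩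
  · obtain ⟨hCY, -, hCmax⟩ := hC p le_rfl
    exact Finset.eq_of_subset_of_card_le hCY (hCmax Y subset_rfl hY).card_eq.le
  · obtain ⟨β, hβ, hBi⟩ := hB i hi
    exact (hC i hi.le).subset_of_insert hβ (hBi ▸ hC (i + 1) hi)

end Greatest

section Duality

open OrderDual

variable {α : Type*} [LinearOrder α]

theorem sort_map_toDual (A : Finset α) :
    (A.map toDual.toEmbedding).sort (· ≤ ·) = ((A.sort (· ≤ ·)).reverse).map toDual := by
  set l := ((A.sort (· ≤ ·)).reverse).map toDual
  have hl : l.toFinset = A.map toDual.toEmbedding := by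
    ext x
    simp only [l, List.mem_toFinset, List.mem_map, List.mem_reverse, Finset.mem_sort,
      Finset.mem_map_equiv]
    exact ⟨fun ⟨a, ha, h⟩ => h ▸ ha, fun h => ⟨_, h, rfl⟩⟩
  have hsorted : l.Pairwise (· ≤ ·) := by
    rw [List.pairwise_map, List.pairwise_reverse]
    exact (A.pairwise_sort (· ≤ ·)).imp id
  rw [← hl]
  exact (List.toFinset_sort _ ((List.nodup_reverse.2 (A.sort_nodup _)).map toDual.injective)).2
    hsorted

theorem dom_map_toDual_iff {A B : Finset α} :
    Dom (B.map toDual.toEmbedding) (A.map toDual.toEmbedding) ↔ Dom A B := by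
  rw [Dom, Dom, sort_map_toDual, sort_map_toDual, List.forall₂_map_left_iff,
    List.forall₂_map_right_iff, List.forall₂_reverse_iff]
  simp only [toDual_le_toDual]
  exact ⟨List.Forall₂.flip, List.Forall₂.flip⟩

variable [Fintype α]

theorem numGe_compl_add (A : Finset α) (t : α) :
    numGe Aᶜ t + numGe A t = numGe Finset.univ t := by
  rw [numGe, numGe, numGe, ← Finset.card_union_of_disjoint
    (Finset.disjoint_filter_filter disjoint_compl_left), ← Finset.filter_union,
    ← Finset.sup_eq_union, compl_sup_eq_top, Finset.top_eq_univ]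

theorem dom_compl_iff {A B : Finset α} : Dom Bᶜ Aᶜ ↔ Dom A B := by
  simp only [dom_iff_numGe, Finset.card_compl]
  have hA := A.card_le_univ
  have hB := B.card_le_univ
  refine and_congr (by omega) (forall_congr' fun t => ?_)
  have := numGe_compl_add A t
  have := numGe_compl_add B t
  omega

def dualCompl : Finset α ≃ Finset αᵒᵈ :=
  (Function.Involutive.toPerm _ compl_involutive).trans (Equiv.finsetCongr toDual)

theorem dualCompl_apply (A : Finset α) : dualCompl A = Aᶜ.map toDual.toEmbedding :=
  rfl

theorem dom_dualCompl_iff {A B : Finset α} : Dom (dualCompl A) (dualCompl B) ↔ Dom A B := by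
  rw [dualCompl_apply, dualCompl_apply, dom_map_toDual_iff, dom_compl_iff]

theorem dualCompl_subset_dualCompl_iff {A B : Finset α} :
    dualCompl A ⊆ dualCompl B ↔ B ⊆ A := by
  rw [dualCompl_apply, dualCompl_apply, Finset.map_subset_map, Finset.compl_subset_compl]

theorem dualCompl_eq_insert {A : Finset α} {a : α} (ha : a ∉ A) :
    dualCompl A = insert (toDual a) (dualCompl (insert a A)) := by
  rw [dualCompl_apply, dualCompl_apply, Finset.compl_insert, Finset.map_erase,
    Equiv.toEmbedding_apply]
  exact (Finset.insert_erase (Finset.mem_map_of_mem _ (Finset.mem_compl.2 ha))).symm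

end Duality

section Permutations

variable {n : ℕ}

theorem filter_val_lt_succ {i : ℕ} (h : i < n) :
    Finset.univ.filter (fun j : Fin n => (j : ℕ) < i + 1) =
      insert ⟨i, h⟩ (Finset.univ.filter (fun j : Fin n => (j : ℕ) < i)) := by
  ext j
  simp only [Finset.mem_filter, Finset.mem_univ, true_and, Finset.mem_insert, Fin.ext_iff]
  omega

theorem initSet_card (w : Equiv.Perm (Fin n)) {i : ℕ} (h : i ≤ n) : (initSet w i).card = i := by
  rw [initSet, Finset.card_image_of_injective _ w.injective, Fin.card_filter_val_lt]
  omega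

theorem initSet_succ (w : Equiv.Perm (Fin n)) {i : ℕ} (h : i < n) :
    initSet w (i + 1) = insert (w ⟨i, h⟩) (initSet w i) := by
  rw [initSet, filter_val_lt_succ h, Finset.image_insert, initSet]

theorem apply_notMem_initSet (w : Equiv.Perm (Fin n)) {i : ℕ} (h : i < n) :
    w ⟨i, h⟩ ∉ initSet w i := by
  simp [initSet]

theorem initSet_mono (w : Equiv.Perm (Fin n)) : Monotone (initSet w) :=
  fun _ _ hij => Finset.image_subset_image
    (Finset.monotone_filter_right _ fun _ _ hj => lt_of_lt_of_le hj hij)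

theorem exists_perm_initSet_eq (C : ℕ → Finset (Fin n)) (hmono : ∀ i < n, C i ⊆ C (i + 1))
    (hcard : ∀ i ≤ n, (C i).card = i) :
    ∃ θ : Equiv.Perm (Fin n), ∀ i ≤ n, initSet θ i = C i := by
  have hstep (j : Fin n) : ∃ a, C (j + 1) = insert a (C j) := by
    obtain ⟨a, ha⟩ := Finset.card_eq_one.1 (by
      rw [Finset.card_sdiff_of_subset (hmono j j.2), hcard _ j.2, hcard _ j.2.le]; omega :
        (C (j + 1) \ C j).card = 1)
    exact ⟨a, by rw [Finset.insert_eq, ← ha, Finset.sdiff_union_of_subset (hmono j j.2)]⟩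
  choose g hg using hstep
  have himage : ∀ i ≤ n, (Finset.univ.filter (fun j : Fin n => (j : ℕ) < i)).image g = C i := by
    intro i hi
    induction i with
    | zero => simpa [eq_comm] using Finset.card_eq_zero.1 (hcard 0 hi)
    | succ i ih => rw [filter_val_lt_succ hi, Finset.image_insert, ih (by omega), hg ⟨i, hi⟩]
  have hinj : Function.Injective g := by
    have hcardn := himage n le_rfl
    rw [Finset.filter_true_of_mem fun j _ => j.2] at hcardn
    rw [← Set.injOn_univ, ← Finset.coe_univ, ← Finset.card_image_iff, hcardn, hcard n le_rfl,
      Finset.card_univ, Fintype.card_fin]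
  exact ⟨Equiv.ofBijective g (Finite.injective_iff_bijective.1 hinj), himage⟩

theorem Bruhat.antisymm {v w : Equiv.Perm (Fin n)} (hvw : Bruhat v w) (hwv : Bruhat w v) :
    v = w := by
  ext j
  have hset (i : ℕ) (hi : i ≤ n) : initSet v i = initSet w i := (hvw i hi).antisymm (hwv i hi)
  have hmem := initSet_succ v j.2 ▸ Finset.mem_insert_self (v ⟨j, j.2⟩) (initSet v j)
  rw [hset _ j.2, initSet_succ w j.2, Finset.mem_insert] at hmem
  exact congrArg Fin.val (hmem.resolve_right (hset j j.2.le ▸ apply_notMem_initSet v j.2))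

end Permutations

section Main

open OrderDual

variable {n p : ℕ} {Y : Finset (Fin n)} {w : Equiv.Perm (Fin n)}

theorem exists_bruhat_greatest_chain (hp : p ≤ n) (hdom : Dom Y (initSet w p)) :
    ∃ C : ℕ → Finset (Fin n), C p = Y ∧ (∀ i < n, C i ⊆ C (i + 1)) ∧
      (∀ i ≤ p, IsDomGreatest Y (initSet w i) (C i)) ∧
      ∀ i, p ≤ i → i ≤ n →
        IsDomGreatest (dualCompl Y) (dualCompl (initSet w i)) (dualCompl (C i)) := by
  obtain ⟨L, hLp, hLmono, hL⟩ := exists_isDomGreatest_chain (B := initSet w)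
    (fun i hi => ⟨w ⟨i, by omega⟩, apply_notMem_initSet w _, initSet_succ w _⟩) hdom
  -- the sets above level `p` are found as complements, in the reversed order
  obtain ⟨D, hDp, hDmono, hD⟩ := exists_isDomGreatest_chain
    (B := fun j => dualCompl (initSet w (n - j))) (p := n - p) (Y := dualCompl Y)
    (fun j hj => by
      have hk : n - j = n - (j + 1) + 1 := by omega
      refine ⟨toDual (w ⟨n - (j + 1), by omega⟩), ?_, ?_⟩
      · rw [hk, initSet_succ w (by omega), dualCompl_apply, Finset.mem_map_equiv]
        simp
      · rw [dualCompl_eq_insert (apply_notMem_initSet w (by omega)), ← initSet_succ, ← hk])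
    (by rwa [Nat.sub_sub_self hp, dom_dualCompl_iff])
  set U := fun i => dualCompl.symm (D (n - i))
  have hU (i : ℕ) : dualCompl (U i) = D (n - i) := dualCompl.apply_symm_apply _
  have hLU {i : ℕ} (hpi : p ≤ i) : (if i ≤ p then L i else U i) = U i := by
    split_ifs with hip
    · rw [le_antisymm hip hpi, hLp, ← dualCompl.injective.eq_iff, hU, hDp]
    · rfl
  refine ⟨fun i => if i ≤ p then L i else U i, by simp [hLp], fun i hi => ?_,
    fun i hi => by simpa [hi] using hL i hi, fun i hpi hin => ?_⟩
  · by_cases hip : i + 1 ≤ p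
    · simpa [hip, (Nat.le_succ i).trans hip] using hLmono i hip
    · simp only [hLU (show p ≤ i by omega), hLU (show p ≤ i + 1 by omega)]
      rw [← dualCompl_subset_dualCompl_iff, hU, hU, show n - i = n - (i + 1) + 1 by omega]
      exact hDmono _ (by omega)
  · simp only [hLU hpi, hU]
    simpa [Nat.sub_sub_self hin] using hD (n - i) (by omega)

theorem exists_bruhat_greatest (hp : p ≤ n) (hdom : Dom Y (initSet w p)) :
    ∃ θ : Equiv.Perm (Fin n), initSet θ p = Y ∧ Bruhat θ w ∧
      ∀ v : Equiv.Perm (Fin n), initSet v p = Y → Bruhat v w → Bruhat v θ := by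
  obtain ⟨C, hCp, hmono, hlow, hup⟩ := exists_bruhat_greatest_chain hp hdom
  have hCw (i : ℕ) (hi : i ≤ n) : Dom (C i) (initSet w i) := by
    rcases le_total i p with hip | hpi
    · exact (hlow i hip).2.1
    · exact dom_dualCompl_iff.1 (hup i hpi hi).2.1
  obtain ⟨θ, hθ⟩ := exists_perm_initSet_eq C hmono fun i hi =>
    (hCw i hi).card_eq.trans (initSet_card w hi)
  refine ⟨θ, hθ p hp ▸ hCp, fun i hi => hθ i hi ▸ hCw i hi, fun v hvY hvw i hi => ?_⟩
  rw [hθ i hi]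
  rcases le_total i p with hip | hpi
  · exact (hlow i hip).2.2 _ (hvY ▸ initSet_mono v hip) (hvw i hi)
  · exact dom_dualCompl_iff.1 <| (hup i hpi hi).2.2 _
      (dualCompl_subset_dualCompl_iff.2 (hvY ▸ initSet_mono v hpi)) (dom_dualCompl_iff.2 (hvw i hi))

end Main

theorem stmt12_general (n p : ℕ) (hp : p ≤ n)
    (Y : Finset (Fin n))
    (w : Equiv.Perm (Fin n)) (hdom : Dom Y (initSet w p)) :
    ∃! θ : Equiv.Perm (Fin n),
      initSet θ p = Y ∧ Bruhat θ w ∧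
      ∀ v : Equiv.Perm (Fin n), initSet v p = Y → Bruhat v w → Bruhat v θ := by
  obtain ⟨θ, hθ⟩ := exists_bruhat_greatest hp hdom
  exact ⟨θ, hθ, fun θ' hθ' => (hθ.2.2 θ' hθ'.1 hθ'.2.1).antisymm (hθ'.2.2 θ hθ.1 hθ.2.1)⟩

theorem stmt12 (n p : ℕ) (hn : 1 ≤ n) (hp : p ≤ n)
    (Y : Finset (Fin n)) (hYc : Y.card = p)
    (w : Equiv.Perm (Fin n)) (hdom : Dom Y (initSet w p)) :
    ∃! θ : Equiv.Perm (Fin n),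
      initSet θ p = Y ∧ Bruhat θ w ∧
      ∀ v : Equiv.Perm (Fin n), initSet v p = Y → Bruhat v w → Bruhat v θ :=
  stmt12_general n p hp Y w hdom
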